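/- Let (V_{i,j})_{1≤i≤m,1≤j≤n} ∈ F_{κ_{•,•}}(A_•), where A_i = x^{m−i}(ker x^{m−i+1}) and κ is obtained from a matrix α satisfying conditions (1)–(3) by κ_{i,j} = α_{m−i+1,j} − α_{m−i,j} for i ≤ m−1, κ_{m,j} = α_{1,j}. Let x̂^{m−i}: A_i → E_{m−i+1} be the inverse of the linear isomorphism x^{m−i}: E_{m−i+1} → A_i, and set W_j := ⊕_{i=1}^m x̂^{m−i}(V_{i,j}). Then (W_1,…,W_n) is a flag with W_j ⊆ W_{j'} for j ≤ j', dim W_j = k_j, each W_j is x-stable and homogeneous with respect to the grading A = E_1 ⊕ … ⊕ E_m (hence s-fixed), and dim(W_j ∩ ker x^i) = α_{i,j} for all i,j. -/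
import Mathlib


open Module Submodule

private lemma aux_finrank_map_add {K A : Type*} [Field K] [AddCommGroup A] [Module K A]
    [FiniteDimensional K A] (f : A →ₗ[K] A) (p : Submodule K A) :
    finrank K ↥(p.map f) + finrank K ↥(p ⊓ LinearMap.ker f) = finrank K ↥p := by
  have h := LinearMap.finrank_range_add_finrank_ker (f.domRestrict p)
  rw [LinearMap.range_domRestrict, LinearMap.ker_domRestrict] at h
  rw [← h]
  congr 1
  rw [← Submodule.map_comap_subtype, Submodule.finrank_map_subtype_eq]

private lemma aux_dim_sup {K A : Type*} [Field K] [AddCommGroup A] [Module K A]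
    [FiniteDimensional K A] (b : ℕ) (p : ℕ → Submodule K A) :
    ∀ t a, a + t = b + 1 →
      (∀ i' ∈ Finset.Icc a b, Disjoint (p i') (⨆ i'' ∈ Finset.Icc (i' + 1) b, p i'')) →
      finrank K ↥(⨆ i' ∈ Finset.Icc a b, p i') = ∑ i' ∈ Finset.Icc a b, finrank K ↥(p i') := by
  intro t
  induction t with
  | zero =>
    intro a ha _
    have : Finset.Icc a b = ∅ := Finset.Icc_eq_empty (by omega)
    simp [this]
  | succ t ih =>
    intro a ha hd
    have hab : a ≤ b := by omega
    have hins : Finset.Icc a b = insert a (Finset.Icc (a + 1) b) := by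
      ext y; simp only [Finset.mem_Icc, Finset.mem_insert]; omega
    rw [hins, Finset.iSup_insert, Finset.sum_insert (by simp only [Finset.mem_Icc]; omega)]
    have hd1 : Disjoint (p a) (⨆ i'' ∈ Finset.Icc (a + 1) b, p i'') :=
      hd a (Finset.mem_Icc.mpr ⟨le_refl a, hab⟩)
    have hrest := ih (a + 1) (by omega) (fun i' hi' => hd i' (by
      simp only [Finset.mem_Icc] at hi' ⊢; omega))
    have h2 := Submodule.finrank_sup_add_finrank_inf_eq (p a)
      (⨆ i'' ∈ Finset.Icc (a + 1) b, p i'')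
    rw [hd1.eq_bot] at h2
    simp only [finrank_bot, add_zero] at h2
    omega

/-- Let `(V i j) ∈ F_κ(A_•)`, where `A_i = x^(m-i) (ker x^(m-i+1))` and
`κ` is obtained from a matrix `α` satisfying conditions (1)–(3) by
`κ i j = α (m-i+1) j − α (m-i) j` for `i ≤ m-1` and `κ m j = α 1 j`.  Let
`x̂^(m-i) : A_i → E (m-i+1)` be the inverse of the isomorphism `x^(m-i) : E (m-i+1) → A_i`
(so that `x̂^(m-i) (V i j) = E (m-i+1) ∩ (x^(m-i))⁻¹ (V i j)`), and set
`W j := ⊕_{i=1}^m x̂^(m-i) (V i j)`.  Then `(W 1, …, W n)` is a flag with `W j ⊆ W j'`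
for `j ≤ j'`, `dim (W j) = k j`, each `W j` is `x`-stable and homogeneous with respect to
the grading `A = E 1 ⊕ … ⊕ E m` (hence `s`-fixed), and `dim (W j ∩ ker x^i) = α i j`. -/
theorem inverse_map_wellDefined
    (K : Type*) [Field K] [IsAlgClosed K] [CharZero K]
    (A : Type*) [AddCommGroup A] [Module K A] [FiniteDimensional K A]
    (x : Module.End K A) (m : ℕ) (hm : 1 ≤ m)
    (hxm : x ^ m = 0) (hxm1 : x ^ (m - 1) ≠ 0)
    (n : ℕ) (d : ℕ) (hd : d = finrank K A)
    (k : ℕ → ℕ) (hk : ∀ j j', 1 ≤ j → j ≤ j' → j' ≤ n → k j ≤ k j')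
    (hkd : ∀ j, 1 ≤ j → j ≤ n → k j ≤ d)
    -- the semisimple element `s`, with `s x s⁻¹ = q x`, encoded through the grading
    (s : A ≃ₗ[K] A) (q : Kˣ) (lam0 : Kˣ)
    (hsx : ∀ v : A, s (x v) = (q : K) • x (s v))
    (E : ℕ → Submodule K A)
    (hEker : ∀ i, i ≤ m → LinearMap.ker (x ^ i) = ⨆ h ∈ Finset.Icc 1 i, E h)
    (hEindep : ∀ i, 1 ≤ i → i ≤ m → Disjoint (E i) (LinearMap.ker (x ^ (i - 1))))
    (hEx : ∀ i, 2 ≤ i → i ≤ m → (E i).map x ≤ E (i - 1))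
    (hEs : ∀ i, 1 ≤ i → i ≤ m → ∀ v ∈ E i, s v = ((lam0 : K) * ((q : K)⁻¹) ^ i) • v)
    (hdist : ∀ i i', 1 ≤ i → i < i' → i' ≤ m →
      (lam0 : K) * ((q : K)⁻¹) ^ i ≠ (lam0 : K) * ((q : K)⁻¹) ^ i')
    -- the matrix `α`, satisfying conditions (1)–(3)
    (α : ℕ → ℕ → ℕ)
    (l : ℕ → ℕ) (hl : ∀ i, l i = finrank K ↥(LinearMap.ker (x ^ i)))
    (h1a : ∀ i i' j j', 1 ≤ i → i ≤ i' → i' ≤ m → 1 ≤ j → j ≤ j' → j' ≤ n → α i j ≤ α i' j')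
    (h1b : ∀ j, 1 ≤ j → j ≤ n → α m j = k j)
    (h2a : ∀ i i' j j', 2 ≤ i → i ≤ i' → i' ≤ m → 1 ≤ j' → j' ≤ j → j ≤ n →
      α i' j' + α (i - 1) j ≤ α i j + α (i' - 1) j')
    (h2b : ∀ i j, 2 ≤ i → i ≤ m → 1 ≤ j → j ≤ n → α i j ≤ α (i - 1) j + α 1 j)
    (h3a : ∀ i j, 2 ≤ i → i ≤ m → 1 ≤ j → j ≤ n → α i j + l (i - 1) ≤ α (i - 1) j + l i)
    (h3b : ∀ j, 1 ≤ j → j ≤ n → α 1 j ≤ l 1)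
    -- the matrix `κ`, through its defining equations
    (κ : ℕ → ℕ → ℕ)
    (hκ1 : ∀ i j, 1 ≤ i → i ≤ m - 1 → 1 ≤ j → j ≤ n → κ i j + α (m - i) j = α (m - i + 1) j)
    (hκ2 : ∀ j, 1 ≤ j → j ≤ n → κ m j = α 1 j)
    -- the element `(V i j)` of `F_κ(A_•)`
    (V : ℕ → ℕ → Submodule K A)
    (hVA : ∀ i j, 1 ≤ i → i ≤ m → 1 ≤ j → j ≤ n →
      V i j ≤ (LinearMap.ker (x ^ (m - i + 1))).map (x ^ (m - i)))
    (hVdim : ∀ i j, 1 ≤ i → i ≤ m → 1 ≤ j → j ≤ n → finrank K ↥(V i j) = κ i j)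
    (hVmono : ∀ i i' j j', 1 ≤ i → i ≤ i' → i' ≤ m → 1 ≤ j → j ≤ j' → j' ≤ n →
      V i j ≤ V i' j')
    -- the flag `W`, where `W j = ⊕_i x̂^(m-i) (V i j)`
    (W : ℕ → Submodule K A)
    (hW : ∀ j, W j =
      ⨆ i ∈ Finset.Icc 1 m, (E (m - i + 1) ⊓ (V i j).comap (x ^ (m - i)))) :
    (∀ j j', 1 ≤ j → j ≤ j' → j' ≤ n → W j ≤ W j') ∧
    (∀ j, 1 ≤ j → j ≤ n → finrank K ↥(W j) = k j) ∧
    (∀ j, 1 ≤ j → j ≤ n → (W j).map x ≤ W j) ∧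
    (∀ j, 1 ≤ j → j ≤ n → W j = ⨆ h ∈ Finset.Icc 1 m, (E h ⊓ W j)) ∧
    (∀ j, 1 ≤ j → j ≤ n → (W j).map s.toLinearMap = W j) ∧
    (∀ i j, 1 ≤ i → i ≤ m → 1 ≤ j → j ≤ n →
      finrank K ↥(W j ⊓ LinearMap.ker (x ^ i)) = α i j) := by

  classical
  -- the pieces `C i j = x̂^(m-i) (V i j)`
  set C : ℕ → ℕ → Submodule K A :=
    fun i j => E (m - i + 1) ⊓ (V i j).comap (x ^ (m - i)) with hCdef
  have hWC : ∀ j, W j = ⨆ i ∈ Finset.Icc 1 m, C i j := hW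
  -- kernels are monotone
  have hker_mono : ∀ a b : ℕ, a ≤ b → LinearMap.ker (x ^ a) ≤ LinearMap.ker (x ^ b) := by
    intro a b hab v hv
    rw [LinearMap.mem_ker] at hv ⊢
    rw [show x ^ b = x ^ (b - a) * x ^ a from by rw [← pow_add]; congr 1; omega,
      Module.End.mul_apply, hv, map_zero]
  -- each `E h` lies in `ker x^h`
  have hEle : ∀ h, 1 ≤ h → h ≤ m → E h ≤ LinearMap.ker (x ^ h) := by
    intro h h1 h2
    rw [hEker h h2]
    exact le_iSup₂ (f := fun h' _ => E h') h (Finset.mem_Icc.mpr ⟨h1, le_refl h⟩)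
  -- basic facts about the pieces
  have hCE : ∀ i j, C i j ≤ E (m - i + 1) := fun i j => inf_le_left
  have hCker : ∀ i j, 1 ≤ i → i ≤ m → C i j ≤ LinearMap.ker (x ^ (m - i + 1)) :=
    fun i j hi1 hi2 => le_trans (hCE i j) (hEle _ (by omega) (by omega))
  have hCdisj : ∀ i j, 1 ≤ i → i ≤ m → Disjoint (C i j) (LinearMap.ker (x ^ (m - i))) := by
    intro i j hi1 hi2
    have h := hEindep (m - i + 1) (by omega) (by omega)
    rw [show m - i + 1 - 1 = m - i from by omega] at h
    exact h.mono_left (hCE i j)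
  -- `x^(m-i)` maps `C i j` onto `V i j`
  have hmapC : ∀ i j, 1 ≤ i → i ≤ m → 1 ≤ j → j ≤ n →
      (C i j).map (x ^ (m - i)) = V i j := by
    intro i j hi1 hi2 hj1 hj2
    apply le_antisymm
    · exact Submodule.map_le_iff_le_comap.mpr inf_le_right
    · intro v hv
      have hsplit : LinearMap.ker (x ^ (m - i + 1))
          = E (m - i + 1) ⊔ LinearMap.ker (x ^ (m - i)) := by
        rw [hEker (m - i + 1) (by omega), hEker (m - i) (by omega),
          show Finset.Icc 1 (m - i + 1) = insert (m - i + 1) (Finset.Icc 1 (m - i)) from by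
            ext y; simp only [Finset.mem_Icc, Finset.mem_insert]; omega,
          Finset.iSup_insert]
      obtain ⟨w, hw, hwv⟩ := Submodule.mem_map.mp (hVA i j hi1 hi2 hj1 hj2 hv)
      rw [hsplit] at hw
      obtain ⟨w1, hw1, w0, hw0, rfl⟩ := Submodule.mem_sup.mp hw
      rw [LinearMap.mem_ker] at hw0
      have h1 : (x ^ (m - i)) w1 = v := by
        rw [← hwv, map_add, hw0, add_zero]
      exact Submodule.mem_map.mpr ⟨w1, Submodule.mem_inf.mpr ⟨hw1,
        Submodule.mem_comap.mpr (by rw [h1]; exact hv)⟩, h1⟩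
  -- dimension of the pieces
  have hCdim : ∀ i j, 1 ≤ i → i ≤ m → 1 ≤ j → j ≤ n → finrank K ↥(C i j) = κ i j := by
    intro i j hi1 hi2 hj1 hj2
    have h := aux_finrank_map_add (x ^ (m - i)) (C i j)
    rw [hmapC i j hi1 hi2 hj1 hj2, (hCdisj i j hi1 hi2).eq_bot] at h
    simp only [finrank_bot, add_zero] at h
    rw [← h, hVdim i j hi1 hi2 hj1 hj2]
  -- images of the grading pieces under powers of `x`
  have hEpow : ∀ t h, t < h → h ≤ m → (E h).map (x ^ t) ≤ E (h - t) := by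
    intro t
    induction t with
    | zero =>
      intro h _ _
      rw [pow_zero, Module.End.one_eq_id, Submodule.map_id, Nat.sub_zero]
    | succ t ih =>
      intro h ht hm'
      rw [pow_succ' x t, Module.End.mul_eq_comp, Submodule.map_comp]
      calc Submodule.map x (Submodule.map (x ^ t) (E h))
          ≤ Submodule.map x (E (h - t)) := Submodule.map_mono (ih h (by omega) hm')
        _ ≤ E (h - t - 1) := hEx (h - t) (by omega) (by omega)
        _ = E (h - (t + 1)) := by rw [Nat.sub_sub]
  have hkerpow : ∀ t u : ℕ, t ≤ u →
      (LinearMap.ker (x ^ u)).map (x ^ t) ≤ LinearMap.ker (x ^ (u - t)) := by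
    intro t u htu v hv
    obtain ⟨w, hw, rfl⟩ := Submodule.mem_map.mp hv
    rw [LinearMap.mem_ker] at hw ⊢
    rw [← Module.End.mul_apply, ← pow_add, show u - t + t = u from by omega, hw]
  -- the pieces are independent (as needed for `aux_dim_sup`)
  have hCindep : ∀ j, 1 ≤ j → j ≤ n → ∀ i' ∈ Finset.Icc 1 m,
      Disjoint (C i' j) (⨆ i'' ∈ Finset.Icc (i' + 1) m, C i'' j) := by
    intro j hj1 hj2 i' hi'
    rw [Finset.mem_Icc] at hi'
    have hsup : (⨆ i'' ∈ Finset.Icc (i' + 1) m, C i'' j) ≤ LinearMap.ker (x ^ (m - i')) := by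
      apply iSup₂_le
      intro i'' hi''
      rw [Finset.mem_Icc] at hi''
      exact le_trans (hCker i'' j (by omega) (by omega))
        (hker_mono _ _ (by omega))
    exact (hCdisj i' j hi'.1 hi'.2).mono_right hsup
  -- the telescoping sums of `κ`
  have sumκ : ∀ j, 1 ≤ j → j ≤ n → ∀ t a, 1 ≤ a → a + t = m →
      ∑ i' ∈ Finset.Icc a m, κ i' j = α (m - a + 1) j := by
    intro j hj1 hj2 t
    induction t with
    | zero =>
      intro a ha1 ha
      rw [show a = m from by omega, Finset.Icc_self, Finset.sum_singleton,
        hκ2 j hj1 hj2, show m - m + 1 = 1 from by omega]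
    | succ t ih =>
      intro a ha1 ha
      rw [show Finset.Icc a m = insert a (Finset.Icc (a + 1) m) from by
          ext y; simp only [Finset.mem_Icc, Finset.mem_insert]; omega,
        Finset.sum_insert (by simp only [Finset.mem_Icc]; omega),
        ih (a + 1) (by omega) (by omega),
        show m - (a + 1) + 1 = m - a from by omega]
      have h := hκ1 a j ha1 (by omega) hj1 hj2
      omega
  -- dimension of `W j`
  have hWdim : ∀ j, 1 ≤ j → j ≤ n → finrank K ↥(W j) = α m j := by
    intro j hj1 hj2
    have e1 := aux_dim_sup m (fun i' => C i' j) m 1 (by omega) (hCindep j hj1 hj2)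
    have e2 : ∑ i' ∈ Finset.Icc 1 m, finrank K ↥(C i' j) = ∑ i' ∈ Finset.Icc 1 m, κ i' j :=
      Finset.sum_congr rfl (fun i' hi' => by
        rw [Finset.mem_Icc] at hi'
        exact hCdim i' j hi'.1 hi'.2 hj1 hj2)
    have e3 := sumκ j hj1 hj2 (m - 1) 1 (le_refl 1) (by omega)
    rw [show m - 1 + 1 = m from by omega] at e3
    rw [hWC j, e1, e2, e3]
  -- the intersection dimensions
  have hint : ∀ i j, 1 ≤ i → i ≤ m → 1 ≤ j → j ≤ n →
      finrank K ↥(W j ⊓ LinearMap.ker (x ^ i)) = α i j := by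
    intro i j hi1 hi2 hj1 hj2
    -- the image family
    set q : ℕ → Submodule K A := fun i' => (C i' j).map (x ^ i) with hqdef
    have hqbot : ∀ i', m - i < i' → i' ≤ m → q i' = ⊥ := by
      intro i' h1 h2
      have hle : C i' j ≤ LinearMap.ker (x ^ i) :=
        le_trans (hCker i' j (by omega) h2) (hker_mono _ _ (by omega))
      rw [eq_bot_iff]
      intro v hv
      obtain ⟨w, hw, rfl⟩ := Submodule.mem_map.mp hv
      exact (Submodule.mem_bot K).mpr (hle hw)
    have hqdim : ∀ i', 1 ≤ i' → i' ≤ m - i → finrank K ↥(q i') = κ i' j := by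
      intro i' h1 h2
      have h := aux_finrank_map_add (x ^ i) (C i' j)
      have hdj : C i' j ⊓ LinearMap.ker (x ^ i) = ⊥ :=
        ((hCdisj i' j h1 (by omega)).mono_right (hker_mono _ _ (by omega))).eq_bot
      rw [hdj] at h
      simp only [finrank_bot, add_zero] at h
      show finrank K ↥((C i' j).map (x ^ i)) = κ i' j
      rw [h, hCdim i' j h1 (by omega) hj1 hj2]
    have hqindep : ∀ i' ∈ Finset.Icc 1 m,
        Disjoint (q i') (⨆ i'' ∈ Finset.Icc (i' + 1) m, q i'') := by
      intro i' hi'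
      rw [Finset.mem_Icc] at hi'
      by_cases hcase : m - i < i'
      · rw [hqbot i' hcase hi'.2]
        exact disjoint_bot_left
      · push_neg at hcase
        have hsup : (⨆ i'' ∈ Finset.Icc (i' + 1) m, q i'')
            ≤ LinearMap.ker (x ^ (m - i - i')) := by
          apply iSup₂_le
          intro i'' hi''
          rw [Finset.mem_Icc] at hi''
          by_cases hc2 : m - i < i''
          · rw [hqbot i'' hc2 hi''.2]; exact bot_le
          · push_neg at hc2
            have h1 : q i'' ≤ LinearMap.ker (x ^ (m - i'' + 1 - i)) :=
              le_trans (Submodule.map_mono (hCker i'' j (by omega) hi''.2))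
                (hkerpow i (m - i'' + 1) (by omega))
            exact le_trans h1 (hker_mono _ _ (by omega))
        have hE' : q i' ≤ E (m - i' + 1 - i) :=
          le_trans (Submodule.map_mono (hCE i' j))
            (hEpow i (m - i' + 1) (by omega) (by omega))
        have h := hEindep (m - i' + 1 - i) (by omega) (by omega)
        rw [show m - i' + 1 - i - 1 = m - i - i' from by omega] at h
        exact (h.mono_left hE').mono_right hsup
    have hmapW : (W j).map (x ^ i) = ⨆ i' ∈ Finset.Icc 1 m, q i' := by
      rw [hWC j]
      simp only [Submodule.map_iSup, hqdef]
    have hmapWdim : finrank K ↥((W j).map (x ^ i)) + α i j = α m j := by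
      rw [hmapW, aux_dim_sup m q m 1 (by omega) hqindep]
      have hsum : ∑ i' ∈ Finset.Icc 1 m, finrank K ↥(q i')
          = ∑ i' ∈ Finset.Icc 1 (m - i), κ i' j := by
        rw [show Finset.Icc 1 m = Finset.Icc 1 (m - i) ∪ Finset.Icc (m - i + 1) m from by
            ext y; simp only [Finset.mem_Icc, Finset.mem_union]; omega,
          Finset.sum_union (by
            rw [Finset.disjoint_left]
            intro a ha hb
            rw [Finset.mem_Icc] at ha hb
            omega)]
        have h0 : ∑ i' ∈ Finset.Icc (m - i + 1) m, finrank K ↥(q i') = 0 := by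
          apply Finset.sum_eq_zero
          intro i' hi'
          rw [Finset.mem_Icc] at hi'
          rw [hqbot i' (by omega) hi'.2, finrank_bot]
        rw [h0, add_zero]
        exact Finset.sum_congr rfl (fun i' hi' => by
          rw [Finset.mem_Icc] at hi'
          exact hqdim i' hi'.1 hi'.2)
      rw [hsum]
      have htot := sumκ j hj1 hj2 (m - 1) 1 (le_refl 1) (by omega)
      rw [show m - 1 + 1 = m from by omega] at htot
      have hpart := sumκ j hj1 hj2 (i - 1) (m - i + 1) (by omega) (by omega)
      rw [show m - (m - i + 1) + 1 = i from by omega] at hpart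
      have hsplit2 : ∑ i' ∈ Finset.Icc 1 m, κ i' j
          = ∑ i' ∈ Finset.Icc 1 (m - i), κ i' j + ∑ i' ∈ Finset.Icc (m - i + 1) m, κ i' j := by
        rw [show Finset.Icc 1 m = Finset.Icc 1 (m - i) ∪ Finset.Icc (m - i + 1) m from by
            ext y; simp only [Finset.mem_Icc, Finset.mem_union]; omega,
          Finset.sum_union (by
            rw [Finset.disjoint_left]
            intro a ha hb
            rw [Finset.mem_Icc] at ha hb
            omega)]
      omega
    have hrn := aux_finrank_map_add (x ^ i) (W j)
    have hWd := hWdim j hj1 hj2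
    omega
  refine ⟨?_, ?_, ?_, ?_, ?_, hint⟩
  -- monotonicity
  · intro j j' hj1 hjj' hj'2
    rw [hWC j, hWC j']
    apply iSup₂_le
    intro i hi
    rw [Finset.mem_Icc] at hi
    refine le_iSup₂_of_le i (Finset.mem_Icc.mpr hi) ?_
    exact inf_le_inf le_rfl (Submodule.comap_mono
      (hVmono i i j j' hi.1 le_rfl hi.2 hj1 hjj' hj'2))
  -- dimension
  · intro j hj1 hj2
    rw [hWdim j hj1 hj2, h1b j hj1 hj2]
  -- x-stability
  · intro j hj1 hj2
    rw [hWC j]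
    simp only [Submodule.map_iSup]
    apply iSup₂_le
    intro i hi
    rw [Finset.mem_Icc] at hi
    by_cases hcase : i = m
    · have hle : C i j ≤ LinearMap.ker (x ^ 1) := by
        have := hCker i j hi.1 hi.2
        rwa [show m - i + 1 = 1 from by omega] at this
      intro v hv
      obtain ⟨w, hw, rfl⟩ := Submodule.mem_map.mp hv
      have : x w = 0 := by
        have := hle hw
        rwa [LinearMap.mem_ker, pow_one] at this
      rw [this]
      exact Submodule.zero_mem _
    · have him : i + 1 ≤ m := by omega
      refine le_trans ?_ (le_iSup₂ (f := fun i' (_ : i' ∈ Finset.Icc 1 m) => C i' j)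
        (i + 1) (Finset.mem_Icc.mpr ⟨by omega, him⟩))
      intro v hv
      obtain ⟨w, hw, rfl⟩ := Submodule.mem_map.mp hv
      obtain ⟨hw1, hw2⟩ := hw
      constructor
      · have hE' : x w ∈ E (m - i + 1 - 1) :=
          hEx (m - i + 1) (by omega) (by omega) (Submodule.mem_map.mpr ⟨w, hw1, rfl⟩)
        rwa [show m - i + 1 - 1 = m - (i + 1) + 1 from by omega] at hE'
      · show (x ^ (m - (i + 1))) (x w) ∈ V (i + 1) j
        have heq : (x ^ (m - (i + 1))) (x w) = (x ^ (m - i)) w := by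
          rw [← Module.End.mul_apply, ← pow_succ, show m - (i + 1) + 1 = m - i from by omega]
        rw [heq]
        exact hVmono i (i + 1) j j hi.1 (by omega) him hj1 le_rfl hj2 hw2
  -- homogeneity
  · intro j hj1 hj2
    apply le_antisymm
    · conv_lhs => rw [hWC j]
      apply iSup₂_le
      intro i hi
      rw [Finset.mem_Icc] at hi
      refine le_iSup₂_of_le (m - i + 1)
        (Finset.mem_Icc.mpr ⟨by omega, by omega⟩) (le_inf (hCE i j) ?_)
      rw [hWC j]
      exact le_iSup₂ (f := fun i' (_ : i' ∈ Finset.Icc 1 m) => C i' j) i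
        (Finset.mem_Icc.mpr hi)
    · exact iSup₂_le fun h _ => inf_le_right
  -- s-fixedness
  · intro j hj1 hj2
    have hle : (W j).map s.toLinearMap ≤ W j := by
      rw [hWC j]
      simp only [Submodule.map_iSup]
      apply iSup₂_le
      intro i hi
      rw [Finset.mem_Icc] at hi
      refine le_trans ?_ (le_iSup₂ (f := fun i' (_ : i' ∈ Finset.Icc 1 m) => C i' j)
        i (Finset.mem_Icc.mpr hi))
      intro v hv
      obtain ⟨w, hw, rfl⟩ := Submodule.mem_map.mp hv
      have hs := hEs (m - i + 1) (by omega) (by omega) w (hCE i j hw)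
      have : s.toLinearMap w = ((lam0 : K) * ((q : K)⁻¹) ^ (m - i + 1)) • w := hs
      rw [this]
      exact Submodule.smul_mem _ _ hw
    refine Submodule.eq_of_le_of_finrank_le hle ?_
    rw [show s.toLinearMap = (s : A →ₗ[K] A) from rfl, LinearEquiv.finrank_map_eq]
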